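/- The latent projection of a DAG is acyclic: if G is a DAG over V ∪ H, then the directed part of the latent projection G(V) contains no directed cycles. -/

import Mathlib

/-- Edge relation of the latent projection onto the observed set `Vs`:
a → b iff a, b are observed and there is a directed path from a to b in G
all of whose intermediate vertices are hidden. -/
def projEdge {X : Type*} (E : X → X → Prop) (Vs : Set X) (a b : X) : Prop :=
  a ∈ Vs ∧ b ∈ Vs ∧
    ∃ z : X, Relation.ReflTransGen (fun x y => E x y ∧ y ∉ Vs) a z ∧ E z b

theorem transGen_of_projEdge {X : Type*} {E : X → X → Prop} {Vs : Set X} {a b : X}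
    (h : projEdge E Vs a b) : Relation.TransGen E a b := by
  obtain ⟨-, -, z, hidden_path, last_edge⟩ := h
  exact .tail' (Relation.ReflTransGen.mono (fun _ _ => And.left) _ _ hidden_path) last_edge

/-- The latent projection of a DAG is acyclic: the directed part of G(V)
contains no directed cycles. -/
theorem latent_projection_acyclic {X : Type*}
    (E : X → X → Prop) (Vs : Set X)
    (hacyc : ∀ x : X, ¬ Relation.TransGen E x x) :
    ∀ a : X, ¬ Relation.TransGen (projEdge E Vs) a a := by
  intro a cycle
  exact hacyc a (cycle.lift' id fun _ _ => transGen_of_projEdge)
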